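/- Let K be a convex subset of R^n with diameter D, and let l_1,...,l_T be convex functions on K whose (sub)gradients are bounded in Euclidean norm by G on K. Then the iterates v_1,...,v_T of projected online gradient descent with step sizes η_t = D/(G√t) satisfy, for every v ∈ K, (1/T)·Σ_{t=1}^T l_t(v_t) − (1/T)·Σ_{t=1}^T l_t(v) ≤ 3DG/(2√T). -/

import Mathlib

/-!
Projecting onto a convex set makes an obtuse angle with every point of the set, so the projected
iterate `v'` is no farther from a comparator `u ∈ K` than the gradient step `v - η g`. Expanding
the square gives `2 η ⟪g, v - u⟫ ≤ ‖u - v‖² - ‖u - v'‖² + η² G²`, and by the subgradient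
inequality `⟪g, v - u⟫` bounds the instantaneous regret `l(v) - l(u)`. Dividing by `2 η_t` and
summing, the distance terms telescope by Abel summation (`1 / η_t` is nondecreasing and distances
are at most `D`) to `D² / (2 η_T) = D G √T / 2`, while `Σ η_t G² / 2 ≤ D G √T` because
`Σ_{t ≤ T} 1/√t ≤ 2 √T`.
-/

open scoped RealInnerProductSpace
open Finset

theorem sum_Icc_mul_sub_succ_le {a c : ℕ → ℝ} {A : ℝ} (ha : ∀ t, 0 ≤ a t) (haA : ∀ t, a t ≤ A)
    (hc₁ : 0 ≤ c 1) (hc : MonotoneOn c (Set.Ici 1)) {T : ℕ} (hT : 1 ≤ T) :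
    ∑ t ∈ Icc 1 T, c t * (a t - a (t + 1)) ≤ A * c T := by
  have hcT : 0 ≤ c T := hc₁.trans (hc Set.self_mem_Ici hT hT)
  suffices ∑ t ∈ Icc 1 T, c t * (a t - a (t + 1)) + c T * a (T + 1) ≤ A * c T by
    nlinarith [mul_nonneg hcT (ha (T + 1))]
  induction T, hT using Nat.le_induction with
  | base => simp only [Icc_self, sum_singleton]; nlinarith [mul_le_mul_of_nonneg_left (haA 1) hc₁]
  | succ T hT ih =>
    have hcc : c T ≤ c (T + 1) := hc hT (Set.mem_Ici.2 (by omega)) (Nat.le_succ T)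
    rw [sum_Icc_succ_top (by omega)]
    nlinarith [ih (hc₁.trans (hc Set.self_mem_Ici hT hT)),
      mul_le_mul_of_nonneg_left (haA (T + 1)) (sub_nonneg.2 hcc)]

theorem sum_Icc_inv_sqrt_le (T : ℕ) : ∑ t ∈ Icc 1 T, (√(t : ℝ))⁻¹ ≤ 2 * √(T : ℝ) := by
  induction T with
  | zero => simp
  | succ T ih =>
    rw [sum_Icc_succ_top (by omega), Nat.cast_succ]
    have hpos : 0 < √((T : ℝ) + 1) := by positivity
    have hamgm : 2 * √(T : ℝ) * √((T : ℝ) + 1) ≤ T + (T + 1) := by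
      simpa [Real.sq_sqrt, Nat.cast_nonneg, add_nonneg] using
        two_mul_le_add_sq √(T : ℝ) √((T : ℝ) + 1)
    have hlast : (√((T : ℝ) + 1))⁻¹ ≤ 2 * √((T : ℝ) + 1) - 2 * √(T : ℝ) := by
      rw [inv_le_iff_one_le_mul₀ hpos]
      nlinarith [Real.mul_self_sqrt (show (0 : ℝ) ≤ T + 1 by positivity)]
    linarith

theorem sum_Icc_div_mul_sqrt_le {D G : ℝ} (hD : 0 ≤ D) (hG : 0 < G) (T : ℕ) :
    ∑ t ∈ Icc 1 T, D / (G * √(t : ℝ)) ≤ 2 * D / G * √(T : ℝ) :=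
  calc ∑ t ∈ Icc 1 T, D / (G * √(t : ℝ)) = D / G * ∑ t ∈ Icc 1 T, (√(t : ℝ))⁻¹ := by
        simp only [mul_sum, div_eq_mul_inv, mul_inv, mul_assoc]
    _ ≤ D / G * (2 * √(T : ℝ)) := by gcongr; exact sum_Icc_inv_sqrt_le T
    _ = 2 * D / G * √(T : ℝ) := by ring

section InnerProductSpace

variable {E : Type*} [NormedAddCommGroup E] [InnerProductSpace ℝ E]

theorem Convex.norm_sub_le_of_forall_norm_sub_le {K : Set E} (hK : Convex ℝ K) {p y u : E}
    (hp : p ∈ K) (hmin : ∀ w ∈ K, ‖p - y‖ ≤ ‖w - y‖) (hu : u ∈ K) : ‖u - p‖ ≤ ‖u - y‖ := by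
  have : Nonempty K := ⟨⟨p, hp⟩⟩
  have hinf : ‖y - p‖ = ⨅ w : K, ‖y - w‖ :=
    le_antisymm (le_ciInf fun w => by simpa only [norm_sub_rev y] using hmin w w.2)
      (ciInf_le ⟨0, Set.forall_mem_range.2 fun w : K => norm_nonneg (y - w)⟩ ⟨p, hp⟩)
  have hobtuse : ⟪u - p, y - p⟫ ≤ 0 := by
    rw [real_inner_comm]
    exact (norm_eq_iInf_iff_real_inner_le_zero hK hp).mp hinf u hu
  have hsq : ‖u - y‖ ^ 2 = ‖u - p‖ ^ 2 - 2 * ⟪u - p, y - p⟫ + ‖y - p‖ ^ 2 := by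
    rw [← norm_sub_sq_real, sub_sub_sub_cancel_right]
  refine (pow_le_pow_iff_left₀ (norm_nonneg _) (norm_nonneg _) two_ne_zero).mp ?_
  nlinarith [sq_nonneg ‖y - p‖]

theorem two_mul_inner_sub_le_of_norm_sub_le {u v v' g : E} (η : ℝ)
    (h : ‖u - v'‖ ≤ ‖u - (v - η • g)‖) :
    2 * η * ⟪g, v - u⟫ ≤ ‖u - v‖ ^ 2 - ‖u - v'‖ ^ 2 + η ^ 2 * ‖g‖ ^ 2 := by
  have hexp : ‖u - (v - η • g)‖ ^ 2 = ‖u - v‖ ^ 2 - 2 * η * ⟪g, v - u⟫ + η ^ 2 * ‖g‖ ^ 2 := by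
    rw [show u - (v - η • g) = (u - v) - (-η) • g by rw [neg_smul, sub_neg_eq_add]; abel,
      norm_sub_sq_real, real_inner_smul_right, norm_smul, Real.norm_eq_abs, mul_pow, sq_abs,
      real_inner_comm, ← neg_sub v u, inner_neg_right, norm_neg]
    ring
  nlinarith [pow_le_pow_left₀ (norm_nonneg _) h 2]

theorem sum_inner_sub_le_of_projected_gradient_steps {K : Set E} (hK : Convex ℝ K) {D G : ℝ}
    (hdiam : ∀ u ∈ K, ∀ w ∈ K, ‖u - w‖ ≤ D) {T : ℕ} (hT : 0 < T) {v g : ℕ → E}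
    (hv : ∀ t, v t ∈ K) (hg : ∀ t ∈ Icc 1 T, ‖g t‖ ≤ G) {η : ℕ → ℝ}
    (hη : ∀ t ∈ Set.Ici 1, 0 < η t) (hη_anti : AntitoneOn η (Set.Ici 1))
    (hproj : ∀ t ∈ Icc 1 T,
      ∀ w ∈ K, ‖v (t + 1) - (v t - η t • g t)‖ ≤ ‖w - (v t - η t • g t)‖)
    {u : E} (hu : u ∈ K) :
    ∑ t ∈ Icc 1 T, ⟪g t, v t - u⟫ ≤ D ^ 2 / (2 * η T) + G ^ 2 / 2 * ∑ t ∈ Icc 1 T, η t := by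
  set a : ℕ → ℝ := fun t => ‖u - v t‖ ^ 2
  set c : ℕ → ℝ := fun t => (2 * η t)⁻¹
  have hstep : ∀ t ∈ Icc 1 T, ⟪g t, v t - u⟫ ≤ c t * (a t - a (t + 1)) + G ^ 2 / 2 * η t := by
    intro t ht
    have hηt : 0 < η t := hη t (mem_Icc.1 ht).1
    have hdesc := two_mul_inner_sub_le_of_norm_sub_le (η t)
      (hK.norm_sub_le_of_forall_norm_sub_le (hv (t + 1)) (hproj t ht) hu)
    have hg2 : η t ^ 2 * ‖g t‖ ^ 2 ≤ η t ^ 2 * G ^ 2 :=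
      mul_le_mul_of_nonneg_left (pow_le_pow_left₀ (norm_nonneg _) (hg t ht) 2) (sq_nonneg _)
    calc ⟪g t, v t - u⟫ = (2 * η t)⁻¹ * (2 * η t * ⟪g t, v t - u⟫) := by field_simp
      _ ≤ (2 * η t)⁻¹ * (a t - a (t + 1) + η t ^ 2 * G ^ 2) := by gcongr; linarith
      _ = c t * (a t - a (t + 1)) + G ^ 2 / 2 * η t := by simp only [c]; field_simp
  have htele : ∑ t ∈ Icc 1 T, c t * (a t - a (t + 1)) ≤ D ^ 2 * c T :=
    sum_Icc_mul_sub_succ_le (fun t => sq_nonneg _)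
      (fun t => pow_le_pow_left₀ (norm_nonneg _) (hdiam u hu (v t) (hv t)) 2)
      (inv_nonneg.2 (by linarith [hη 1 Set.self_mem_Ici]))
      (fun s hs t ht hst => inv_anti₀ (by linarith [hη t ht]) (by linarith [hη_anti hs ht hst]))
      hT
  calc ∑ t ∈ Icc 1 T, ⟪g t, v t - u⟫
      ≤ ∑ t ∈ Icc 1 T, (c t * (a t - a (t + 1)) + G ^ 2 / 2 * η t) := sum_le_sum hstep
    _ = ∑ t ∈ Icc 1 T, c t * (a t - a (t + 1)) + G ^ 2 / 2 * ∑ t ∈ Icc 1 T, η t := by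
      rw [sum_add_distrib, mul_sum]
    _ ≤ D ^ 2 / (2 * η T) + G ^ 2 / 2 * ∑ t ∈ Icc 1 T, η t := by
      gcongr
      exact htele.trans_eq (div_eq_mul_inv _ _).symm

end InnerProductSpace

theorem ogd_regret_general
    {n : ℕ} (K : Set (EuclideanSpace ℝ (Fin n))) (hK : Convex ℝ K)
    (D G : ℝ) (hD : 0 < D) (hG : 0 < G)
    (hdiam : ∀ u ∈ K, ∀ w ∈ K, ‖u - w‖ ≤ D)
    (T : ℕ) (hT : 0 < T)
    (l : ℕ → EuclideanSpace ℝ (Fin n) → ℝ)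
    (v : ℕ → EuclideanSpace ℝ (Fin n))
    (hv : ∀ t, v t ∈ K)
    (g : ℕ → EuclideanSpace ℝ (Fin n))
    (hgrad : ∀ t ∈ Finset.Icc 1 T, ∀ u ∈ K, l t (v t) + ⟪g t, u - v t⟫ ≤ l t u)
    (hGbound : ∀ t ∈ Finset.Icc 1 T, ‖g t‖ ≤ G)
    (η : ℕ → ℝ) (hη : ∀ t, η t = D / (G * Real.sqrt t))
    (hproj : ∀ t ∈ Finset.Icc 1 T,
      ∀ u ∈ K, ‖v (t + 1) - (v t - η t • g t)‖ ≤ ‖u - (v t - η t • g t)‖) :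
    ∀ u ∈ K,
      (1 / (T : ℝ)) * ∑ t ∈ Finset.Icc 1 T, l t (v t)
        - (1 / (T : ℝ)) * ∑ t ∈ Finset.Icc 1 T, l t u
      ≤ 3 * D * G / (2 * Real.sqrt T) := by
  intro u hu
  obtain rfl : η = fun t : ℕ => D / (G * √(t : ℝ)) := funext hη
  have hsqrt_pos : ∀ t ∈ Set.Ici (1 : ℕ), 0 < √(t : ℝ) := fun t ht =>
    Real.sqrt_pos.2 (Nat.cast_pos.2 ht)
  have hbound := sum_inner_sub_le_of_projected_gradient_steps hK hdiam hT hv hGbound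
    (fun t ht => by have := hsqrt_pos t ht; positivity)
    (fun s hs t _ hst => by have := hsqrt_pos s hs; gcongr) hproj hu
  have hregret : ∀ t ∈ Icc 1 T, l t (v t) - l t u ≤ ⟪g t, v t - u⟫ := fun t ht => by
    linarith [hgrad t ht u hu, show ⟪g t, u - v t⟫ = -⟪g t, v t - u⟫ by
      rw [← inner_neg_right, neg_sub]]
  have hT_sqrt := hsqrt_pos T hT
  have hsteps : G ^ 2 / 2 * ∑ t ∈ Icc 1 T, D / (G * √(t : ℝ)) ≤ D * G * √(T : ℝ) :=
    calc _ ≤ G ^ 2 / 2 * (2 * D / G * √(T : ℝ)) := by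
          gcongr; exact sum_Icc_div_mul_sqrt_le hD.le hG T
      _ = D * G * √(T : ℝ) := by field_simp
  have hdiam_term : D ^ 2 / (2 * (D / (G * √(T : ℝ)))) = D * G * √(T : ℝ) / 2 := by field_simp
  calc (1 / (T : ℝ)) * ∑ t ∈ Icc 1 T, l t (v t) - (1 / (T : ℝ)) * ∑ t ∈ Icc 1 T, l t u
      = (∑ t ∈ Icc 1 T, (l t (v t) - l t u)) / (√(T : ℝ) * √(T : ℝ)) := by
        rw [sum_sub_distrib, Real.mul_self_sqrt (Nat.cast_nonneg T)]; ring
    _ ≤ (3 / 2 * (D * G * √(T : ℝ))) / (√(T : ℝ) * √(T : ℝ)) := by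
        gcongr; linarith [sum_le_sum hregret]
    _ = 3 * D * G / (2 * √(T : ℝ)) := by field_simp

/-- **Online gradient descent regret bound.**
`K` is a convex set of diameter at most `D`, `l t` are convex losses on `K` with
subgradients `g t` at the iterates `v t`, bounded in norm by `G`. The iterates follow
projected online gradient descent with step sizes `η t = D / (G * √t)`:
`v (t+1)` is the Euclidean projection of `v t - η t • g t` onto `K`.
Then the average regret against any `v ∈ K` is at most `3*D*G/(2*√T)`. -/
theorem ogd_regret
    {n : ℕ} (K : Set (EuclideanSpace ℝ (Fin n))) (hK : Convex ℝ K)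
    (D G : ℝ) (hD : 0 < D) (hG : 0 < G)
    (hdiam : ∀ u ∈ K, ∀ w ∈ K, ‖u - w‖ ≤ D)
    (T : ℕ) (hT : 0 < T)
    (l : ℕ → EuclideanSpace ℝ (Fin n) → ℝ)
    (hconv : ∀ t ∈ Finset.Icc 1 T, ConvexOn ℝ K (l t))
    (v : ℕ → EuclideanSpace ℝ (Fin n))
    (hv : ∀ t, v t ∈ K)
    (g : ℕ → EuclideanSpace ℝ (Fin n))
    (hgrad : ∀ t ∈ Finset.Icc 1 T, ∀ u ∈ K, l t (v t) + ⟪g t, u - v t⟫ ≤ l t u)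
    (hGbound : ∀ t ∈ Finset.Icc 1 T, ‖g t‖ ≤ G)
    (η : ℕ → ℝ) (hη : ∀ t, η t = D / (G * Real.sqrt t))
    (hproj : ∀ t ∈ Finset.Icc 1 T,
      ∀ u ∈ K, ‖v (t + 1) - (v t - η t • g t)‖ ≤ ‖u - (v t - η t • g t)‖) :
    ∀ u ∈ K,
      (1 / (T : ℝ)) * ∑ t ∈ Finset.Icc 1 T, l t (v t)
        - (1 / (T : ℝ)) * ∑ t ∈ Finset.Icc 1 T, l t u
      ≤ 3 * D * G / (2 * Real.sqrt T) :=
  ogd_regret_general K hK D G hD hG hdiam T hT l v hv g hgrad hGbound η hη hproj
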